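/- Uniqueness of the aligned minimizer: if the prototypes w_1, …, w_k form a simplex equiangular tight frame, then for every label y ∈ {1,…,k}, every h ∈ E with ‖h‖ ≤ 1 and L_y(h) = L_y(w_y) satisfies h = w_y; that is, w_y is the unique minimizer of L_y over the closed unit ball. -/

import Mathlib

open scoped RealInnerProductSpace

/-- The limiting per-sample loss
`L_y(h) = log( Σ_c exp⟪w_c, h⟫ ) − 2⟪w_y, h⟫`. -/
noncomputable def limitLoss {d k : ℕ} (w : Fin k → EuclideanSpace ℝ (Fin d)) (y : Fin k)
    (h : EuclideanSpace ℝ (Fin d)) : ℝ :=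
  Real.log (∑ c : Fin k, Real.exp ⟪w c, h⟫) - 2 * ⟪w y, h⟫

/-- **Uniqueness of the aligned minimizer.** If the unit-norm prototypes form a simplex ETF,
then for every label `y`, every `h` in the closed unit ball attaining `L_y(h) = L_y(w_y)`
satisfies `h = w_y`: the prototype `w_y` is the unique minimizer of `L_y` over the unit ball. -/
theorem etf_prototype_unique_minimizer (d k : ℕ) (hd : 0 < d) (hk : 2 ≤ k)
    (w : Fin k → EuclideanSpace ℝ (Fin d)) (hw : ∀ c, ‖w c‖ = 1)
    (hetf : ∀ c c' : Fin k, c ≠ c' → ⟪w c, w c'⟫ = -1 / ((k : ℝ) - 1)) :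
    ∀ y : Fin k, ∀ h : EuclideanSpace ℝ (Fin d), ‖h‖ ≤ 1 →
      limitLoss w y h = limitLoss w y (w y) → h = w y := by
  intro y h hnorm heq
  haveI : Nonempty (Fin k) := ⟨⟨0, by omega⟩⟩
  have hk1 : (1:ℝ) ≤ (k:ℝ) - 1 := by
    have : (2:ℝ) ≤ (k:ℝ) := by exact_mod_cast hk
    linarith
  have hkne : ((k:ℝ) - 1) ≠ 0 := by linarith
  have hcast : ((k - 1 : ℕ) : ℝ) = (k:ℝ) - 1 := by
    have h1 : 1 ≤ k := by omega
    push_cast [h1]; ring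
  -- self inner products
  have hself : ∀ c, ⟪w c, w c⟫ = (1:ℝ) := by
    intro c
    rw [real_inner_self_eq_norm_sq, hw c]; norm_num
  set v : ℝ := -1 / ((k:ℝ) - 1) with hv
  set q : ℝ := Real.exp v with hq
  set e1 : ℝ := Real.exp 1 with he1
  have hqpos : 0 < q := Real.exp_pos _
  have he1pos : 0 < e1 := Real.exp_pos _
  -- rows sum to zero
  have hrow : ∀ c, ∑ c', ⟪w c, w c'⟫ = (0:ℝ) := by
    intro c
    rw [← Finset.sum_erase_add _ _ (Finset.mem_univ c), hself c]
    have h2 : ∀ c' ∈ Finset.univ.erase c, ⟪w c, w c'⟫ = v := by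
      intro c' hc'
      exact hetf c c' (Ne.symm (Finset.ne_of_mem_erase hc'))
    rw [Finset.sum_congr rfl h2, Finset.sum_const,
      Finset.card_erase_of_mem (Finset.mem_univ c), Finset.card_univ, Fintype.card_fin,
      nsmul_eq_mul, hcast, hv]
    field_simp
    ring
  have hsum0 : ∑ c, w c = 0 := by
    rw [← @inner_self_eq_zero ℝ]
    rw [sum_inner]
    refine Finset.sum_eq_zero ?_
    intro c _
    rw [inner_sum]
    exact hrow c
  have ha0 : ∑ c, ⟪w c, h⟫ = (0:ℝ) := by
    rw [← sum_inner, hsum0, inner_zero_left]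
  have hErase_a : ∑ c ∈ Finset.univ.erase y, ⟪w c, h⟫ = -⟪w y, h⟫ := by
    have := Finset.sum_erase_add Finset.univ (fun c => ⟪w c, h⟫) (Finset.mem_univ y)
    rw [ha0] at this
    linarith
  set Z : ℝ := e1 + ((k:ℝ) - 1) * q with hZdef
  have hZpos : 0 < Z := by nlinarith
  -- the partition function at w y
  have hZ : ∑ c, Real.exp ⟪w c, w y⟫ = Z := by
    rw [← Finset.sum_erase_add _ _ (Finset.mem_univ y), hself y]
    have h2 : ∀ c ∈ Finset.univ.erase y, Real.exp ⟪w c, w y⟫ = q := by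
      intro c hc
      rw [hetf c y (Finset.ne_of_mem_erase hc)]
    rw [Finset.sum_congr rfl h2, Finset.sum_const,
      Finset.card_erase_of_mem (Finset.mem_univ y), Finset.card_univ, Fintype.card_fin,
      nsmul_eq_mul, hcast, hZdef]
    ring
  -- the linear term
  have hT : ∑ c, Real.exp ⟪w c, w y⟫ * (⟪w c, h⟫ - ⟪w c, w y⟫)
      = (e1 - q) * (⟪w y, h⟫ - 1) := by
    rw [← Finset.sum_erase_add _ _ (Finset.mem_univ y), hself y]
    have h2 : ∀ c ∈ Finset.univ.erase y,
        Real.exp ⟪w c, w y⟫ * (⟪w c, h⟫ - ⟪w c, w y⟫) = q * ⟪w c, h⟫ - q * v := by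
      intro c hc
      rw [hetf c y (Finset.ne_of_mem_erase hc)]
      ring
    rw [Finset.sum_congr rfl h2, Finset.sum_sub_distrib, ← Finset.mul_sum, hErase_a,
      Finset.sum_const, Finset.card_erase_of_mem (Finset.mem_univ y), Finset.card_univ,
      Fintype.card_fin, nsmul_eq_mul, hcast]
    have hkv : ((k:ℝ) - 1) * v = -1 := by
      rw [hv]; field_simp
    have : ((k:ℝ) - 1) * (q * v) = -q := by
      rw [mul_comm q v, ← mul_assoc, hkv]; ring
    rw [this]
    ring
  set c1 : ℝ := (e1 - q) / Z with hc1
  set m : ℝ := c1 * (⟪w y, h⟫ - 1) with hm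
  have hmZ : (e1 - q) * (⟪w y, h⟫ - 1) = m * Z := by
    rw [hm, hc1]; field_simp
  -- the key convexity inequality: Z * exp m ≤ ∑ exp ⟪w c, h⟫
  have hS : Z * Real.exp m ≤ ∑ c, Real.exp ⟪w c, h⟫ := by
    have hpt : ∀ c ∈ Finset.univ,
        Real.exp ⟪w c, w y⟫ * Real.exp m * (1 + (⟪w c, h⟫ - ⟪w c, w y⟫ - m))
          ≤ Real.exp ⟪w c, h⟫ := by
      intro c _
      have h1 : (⟪w c, h⟫ - ⟪w c, w y⟫ - m) + 1 ≤ Real.exp (⟪w c, h⟫ - ⟪w c, w y⟫ - m) :=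
        Real.add_one_le_exp _
      have h2 : Real.exp ⟪w c, w y⟫ * Real.exp m * Real.exp (⟪w c, h⟫ - ⟪w c, w y⟫ - m)
          = Real.exp ⟪w c, h⟫ := by
        rw [← Real.exp_add, ← Real.exp_add]
        ring_nf
      calc Real.exp ⟪w c, w y⟫ * Real.exp m * (1 + (⟪w c, h⟫ - ⟪w c, w y⟫ - m))
          ≤ Real.exp ⟪w c, w y⟫ * Real.exp m * Real.exp (⟪w c, h⟫ - ⟪w c, w y⟫ - m) := by
            apply mul_le_mul_of_nonneg_left (by linarith) (by positivity)
        _ = Real.exp ⟪w c, h⟫ := h2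
    have hsumle := Finset.sum_le_sum hpt
    have hexpand : ∀ c ∈ Finset.univ,
        Real.exp ⟪w c, w y⟫ * Real.exp m * (1 + (⟪w c, h⟫ - ⟪w c, w y⟫ - m))
          = Real.exp m * Real.exp ⟪w c, w y⟫
            + Real.exp m * (Real.exp ⟪w c, w y⟫ * (⟪w c, h⟫ - ⟪w c, w y⟫))
            - (Real.exp m * m) * Real.exp ⟪w c, w y⟫ := by
      intro c _
      ring
    rw [Finset.sum_congr rfl hexpand, Finset.sum_sub_distrib, Finset.sum_add_distrib,
      ← Finset.mul_sum, ← Finset.mul_sum, ← Finset.mul_sum, hZ, hT, hmZ] at hsumle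
    calc Z * Real.exp m
        = Real.exp m * Z + Real.exp m * (m * Z) - Real.exp m * m * Z := by ring
      _ ≤ _ := hsumle
  have hSpos : 0 < ∑ c, Real.exp ⟪w c, h⟫ :=
    Finset.sum_pos (fun c _ => Real.exp_pos _) Finset.univ_nonempty
  have hlog : Real.log Z + m ≤ Real.log (∑ c, Real.exp ⟪w c, h⟫) := by
    have h0 : (0:ℝ) < Z * Real.exp m := by positivity
    have := Real.log_le_log h0 hS
    rwa [Real.log_mul (ne_of_gt hZpos) (Real.exp_ne_zero m), Real.log_exp] at this
  -- unfold the loss equality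
  have heq' : Real.log (∑ c, Real.exp ⟪w c, h⟫) = Real.log Z - 2 + 2 * ⟪w y, h⟫ := by
    have := heq
    simp only [limitLoss] at this
    rw [hZ, hself y] at this
    linarith
  rw [heq'] at hlog
  -- so m ≤ 2 * (⟪w y, h⟫ - 1)
  have hkey : c1 * (⟪w y, h⟫ - 1) ≤ 2 * (⟪w y, h⟫ - 1) := by
    rw [← hm]; linarith
  have hc1lt : c1 < 2 := by
    rw [hc1]
    have : (e1 - q) / Z < 1 := by
      rw [div_lt_one hZpos]
      nlinarith
    linarith
  have hay_le : ⟪w y, h⟫ ≤ 1 := by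
    have := real_inner_le_norm (w y) h
    rw [hw y] at this
    nlinarith
  have hay : ⟪w y, h⟫ = 1 := by
    by_contra hne
    have hlt : ⟪w y, h⟫ < 1 := lt_of_le_of_ne hay_le hne
    have hprod : 0 < (2 - c1) * (1 - ⟪w y, h⟫) :=
      mul_pos (by linarith) (by linarith)
    linarith [hprod, hkey]
  have hhn : ‖h‖ = 1 := by
    have := real_inner_le_norm (w y) h
    rw [hw y, hay] at this
    have : 1 ≤ ‖h‖ := by linarith
    linarith
  exact ((inner_eq_one_iff_of_norm_eq_one (hw y) hhn).mp hay).symm
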